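/- Let $b, d \in C(\overline{B_R})$ with positive lower and upper bounds, and define $\lambda^* = \inf\{\int_{B_R}[D|\nabla\varphi|^2 + (d - b)\varphi^2] : \varphi \in H_0^1(B_R), \int_{B_R}\varphi^2 = 1\}$ and $R_0^{Di} = \sup_{\phi \in H_0^1(B_R), \phi \neq 0} \frac{\int_{B_R} b\,\phi^2}{\int_{B_R}(D|\nabla\phi|^2 + d\,\phi^2)}$. Then $1 - R_0^{Di}$ has the same sign as $\lambda^*$: $\lambda^* > 0 \iff R_0^{Di} < 1$, $\lambda^* = 0 \iff R_0^{Di} = 1$, and $\lambda^* < 0 \iff R_0^{Di} > 1$. -/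

import Mathlib

open MeasureTheory

/-- The threshold value `R_0^{Di}(D, B_R)`, defined as the supremum of the Rayleigh-type
quotients over nonzero test functions in `H_0^1(B_R)` (modeled by `C^1` functions with
support in the ball). -/
noncomputable def R0Di (n : ℕ) (D R : ℝ) (b d : EuclideanSpace ℝ (Fin n) → ℝ) : ℝ :=
  sSup { q : ℝ | ∃ φ : EuclideanSpace ℝ (Fin n) → ℝ,
      ContDiff ℝ 1 φ ∧ tsupport φ ⊆ Metric.ball (0 : EuclideanSpace ℝ (Fin n)) R ∧
      φ ≠ 0 ∧
      q = (∫ x in Metric.ball (0 : EuclideanSpace ℝ (Fin n)) R, b x * (φ x) ^ 2) /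
          (∫ x in Metric.ball (0 : EuclideanSpace ℝ (Fin n)) R,
            (D * ‖fderiv ℝ φ x‖ ^ 2 + d x * (φ x) ^ 2)) }

/-- The variational principal eigenvalue `λ*` of `-DΔ + (d - b)` on `B_R` with
Dirichlet boundary conditions. -/
noncomputable def lamStar (n : ℕ) (D R : ℝ) (b d : EuclideanSpace ℝ (Fin n) → ℝ) : ℝ :=
  sInf { q : ℝ | ∃ φ : EuclideanSpace ℝ (Fin n) → ℝ,
      ContDiff ℝ 1 φ ∧ tsupport φ ⊆ Metric.ball (0 : EuclideanSpace ℝ (Fin n)) R ∧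
      (∫ x in Metric.ball (0 : EuclideanSpace ℝ (Fin n)) R, (φ x) ^ 2) = 1 ∧
      q = ∫ x in Metric.ball (0 : EuclideanSpace ℝ (Fin n)) R,
            (D * ‖fderiv ℝ φ x‖ ^ 2 + (d x - b x) * (φ x) ^ 2) }

/-! For a nonzero test function `φ` write `S φ = ∫ φ²`, `E φ = ∫ D|∇φ|² + d φ²` and
`N φ = ∫ b φ²`. Then `λ*` is the infimum of `(E φ - N φ) / S φ` and `R₀^{Di}` the supremum of
`N φ / E φ`, and for each single `φ` these two quotients lie on the same side of `0` resp. `1`.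
Passing to the infimum and the supremum needs uniform control, which comes from
`b₁ S ≤ E` and `N ≤ b₂ S`: if `λ* > 0` then `N / E ≤ b₂ / (b₂ + λ*)` for every `φ`, and if
`R₀^{Di} < 1` then `λ* ≥ (1 - R₀^{Di}) b₁`. -/

open Metric

section RayleighQuotients

variable {ι : Type*} {Q S E N : ι → ℝ} {m M : ℝ}

lemma eq_iff_eq_of_lt_iff_lt_of_lt_iff_lt {α β : Type*} [LinearOrder α] [LinearOrder β]
    {a x : α} {b y : β} (h₁ : a < x ↔ y < b) (h₂ : x < a ↔ b < y) : x = a ↔ y = b := by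
  rw [← not_iff_not, ← Ne, ← Ne, ne_iff_lt_or_gt, ne_iff_lt_or_gt, h₁, h₂, or_comm]

lemma bddBelow_range_div (hQ : ∀ i, Q i = E i - N i) (hS : ∀ i, 0 < S i)
    (hE : ∀ i, m * S i ≤ E i) (hN : ∀ i, N i ≤ M * S i) :
    BddBelow (Set.range fun i => Q i / S i) :=
  ⟨m - M, by
    rintro _ ⟨i, rfl⟩
    rw [le_div_iff₀ (hS i), hQ i]
    linarith [hE i, hN i]⟩

lemma bddAbove_range_div (hm : 0 < m) (hM : 0 < M) (hS : ∀ i, 0 < S i)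
    (hE : ∀ i, m * S i ≤ E i) (hN : ∀ i, N i ≤ M * S i) :
    BddAbove (Set.range fun i => N i / E i) :=
  ⟨M / m, by
    rintro _ ⟨i, rfl⟩
    rw [div_le_div_iff₀ ((mul_pos hm (hS i)).trans_le (hE i)) hm]
    nlinarith [hE i, hN i]⟩

variable [Nonempty ι]

lemma iSup_div_lt_one_of_pos_iInf_div (hm : 0 < m) (hM : 0 < M)
    (hQ : ∀ i, Q i = E i - N i) (hS : ∀ i, 0 < S i)
    (hE : ∀ i, m * S i ≤ E i) (hN : ∀ i, N i ≤ M * S i) (h : 0 < ⨅ i, Q i / S i) :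
    ⨆ i, N i / E i < 1 := by
  set l := ⨅ i, Q i / S i
  have hl (i : ι) : l * S i ≤ E i - N i :=
    hQ i ▸ (le_div_iff₀ (hS i)).1 (ciInf_le (bddBelow_range_div hQ hS hE hN) i)
  calc ⨆ i, N i / E i ≤ M / (M + l) := ciSup_le fun i => by
        rw [div_le_div_iff₀ ((mul_pos hm (hS i)).trans_le (hE i)) (by positivity)]
        nlinarith [mul_le_mul_of_nonneg_left (hl i) hM.le,
          mul_le_mul_of_nonneg_right (hN i) h.le]
    _ < 1 := (div_lt_one (by positivity)).2 (by linarith)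

lemma pos_iInf_div_of_iSup_div_lt_one (hm : 0 < m) (hM : 0 < M)
    (hQ : ∀ i, Q i = E i - N i) (hS : ∀ i, 0 < S i)
    (hE : ∀ i, m * S i ≤ E i) (hN : ∀ i, N i ≤ M * S i) (h : ⨆ i, N i / E i < 1) :
    0 < ⨅ i, Q i / S i := by
  set r := ⨆ i, N i / E i
  have hr (i : ι) : N i ≤ r * E i :=
    (div_le_iff₀ ((mul_pos hm (hS i)).trans_le (hE i))).1
      (le_ciSup (bddAbove_range_div hm hM hS hE hN) i)
  calc 0 < (1 - r) * m := mul_pos (sub_pos.2 h) hm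
    _ ≤ ⨅ i, Q i / S i := le_ciInf fun i => by
        rw [le_div_iff₀ (hS i), hQ i]
        nlinarith [mul_le_mul_of_nonneg_left (hE i) (sub_pos.2 h).le, hr i]

lemma one_lt_iSup_div_of_iInf_div_neg (hm : 0 < m) (hM : 0 < M)
    (hQ : ∀ i, Q i = E i - N i) (hS : ∀ i, 0 < S i)
    (hE : ∀ i, m * S i ≤ E i) (hN : ∀ i, N i ≤ M * S i) (h : ⨅ i, Q i / S i < 0) :
    1 < ⨆ i, N i / E i := by
  obtain ⟨i, hi⟩ := exists_lt_of_ciInf_lt h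
  have hQi : Q i < 0 := by simpa using (div_lt_iff₀ (hS i)).1 hi
  calc 1 < N i / E i :=
        (one_lt_div ((mul_pos hm (hS i)).trans_le (hE i))).2 (by linarith [hQ i])
    _ ≤ ⨆ i, N i / E i := le_ciSup (bddAbove_range_div hm hM hS hE hN) i

lemma iInf_div_neg_of_one_lt_iSup_div (hm : 0 < m)
    (hQ : ∀ i, Q i = E i - N i) (hS : ∀ i, 0 < S i)
    (hE : ∀ i, m * S i ≤ E i) (hN : ∀ i, N i ≤ M * S i) (h : 1 < ⨆ i, N i / E i) :
    ⨅ i, Q i / S i < 0 := by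
  obtain ⟨i, hi⟩ := exists_lt_of_lt_ciSup h
  have hNi : E i < N i := (one_lt_div ((mul_pos hm (hS i)).trans_le (hE i))).1 hi
  calc ⨅ i, Q i / S i ≤ Q i / S i := ciInf_le (bddBelow_range_div hQ hS hE hN) i
    _ < 0 := div_neg_of_neg_of_pos (by linarith [hQ i]) (hS i)

theorem sign_iInf_div_iff_iSup_div (hm : 0 < m) (hM : 0 < M)
    (hQ : ∀ i, Q i = E i - N i) (hS : ∀ i, 0 < S i)
    (hE : ∀ i, m * S i ≤ E i) (hN : ∀ i, N i ≤ M * S i) :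
    (0 < ⨅ i, Q i / S i ↔ ⨆ i, N i / E i < 1) ∧
    ((⨅ i, Q i / S i) = 0 ↔ ⨆ i, N i / E i = 1) ∧
    (⨅ i, Q i / S i < 0 ↔ 1 < ⨆ i, N i / E i) := by
  have hpos : 0 < ⨅ i, Q i / S i ↔ ⨆ i, N i / E i < 1 :=
    ⟨iSup_div_lt_one_of_pos_iInf_div hm hM hQ hS hE hN,
      pos_iInf_div_of_iSup_div_lt_one hm hM hQ hS hE hN⟩
  have hneg : ⨅ i, Q i / S i < 0 ↔ 1 < ⨆ i, N i / E i :=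
    ⟨one_lt_iSup_div_of_iInf_div_neg hm hM hQ hS hE hN,
      iInf_div_neg_of_one_lt_iSup_div hm hQ hS hE hN⟩
  exact ⟨hpos, eq_iff_eq_of_lt_iff_lt_of_lt_iff_lt hpos hneg, hneg⟩

end RayleighQuotients

section WeightedIntegrals

variable {X : Type*} [MeasurableSpace X] {μ : Measure X} {φ w : X → ℝ}

lemma integral_mul_sq_le {M : ℝ} (hw : ∀ x, w x ≤ M)
    (hwφ : Integrable (fun x => w x * φ x ^ 2) μ) (hφ : Integrable (fun x => φ x ^ 2) μ) :
    ∫ x, w x * φ x ^ 2 ∂μ ≤ M * ∫ x, φ x ^ 2 ∂μ := by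
  rw [← integral_const_mul]
  exact integral_mono hwφ (hφ.const_mul M) fun x => mul_le_mul_of_nonneg_right (hw x) (sq_nonneg _)

lemma integral_sq_const_mul (c : ℝ) :
    ∫ x, (c * φ x) ^ 2 ∂μ = c ^ 2 * ∫ x, φ x ^ 2 ∂μ := by
  simp_rw [mul_pow, integral_const_mul]

end WeightedIntegrals

lemma HasCompactSupport.sq {α M₀ : Type*} [TopologicalSpace α] [MonoidWithZero M₀] {f : α → M₀}
    (hc : HasCompactSupport f) : HasCompactSupport fun x => f x ^ 2 :=
  hc.comp_left (g := fun y : M₀ => y ^ 2) (zero_pow two_ne_zero)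

section CompactlySupported

variable {X : Type*} [TopologicalSpace X] [MeasurableSpace X] [OpensMeasurableSpace X]
  {μ : Measure X} [IsFiniteMeasureOnCompacts μ] {φ : X → ℝ}

lemma Continuous.integrable_sq_of_hasCompactSupport (hφ : Continuous φ) (hc : HasCompactSupport φ) :
    Integrable (fun x => φ x ^ 2) μ :=
  (hφ.pow 2).integrable_of_hasCompactSupport hc.sq

lemma setIntegral_sq_pos [μ.IsOpenPosMeasure] {s : Set X}
    (hφ : Continuous φ) (hc : HasCompactSupport φ) (hs : tsupport φ ⊆ s) (hne : φ ≠ 0) :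
    0 < ∫ x in s, φ x ^ 2 ∂μ := by
  obtain ⟨x, hx⟩ := Function.ne_iff.1 hne
  rw [setIntegral_eq_integral_of_forall_compl_eq_zero fun y hy => by
    rw [image_eq_zero_of_notMem_tsupport (fun h => hy (hs h)), zero_pow two_ne_zero]]
  exact (hφ.pow 2).integral_pos_of_hasCompactSupport_nonneg_nonzero hc.sq
    (fun _ => sq_nonneg _) (pow_ne_zero 2 hx)

end CompactlySupported

section DirichletEnergy

variable {V : Type*} [NormedAddCommGroup V] [NormedSpace ℝ V] [MeasurableSpace V]
  {μ : Measure V} {φ w : V → ℝ}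

lemma ContDiff.integrable_norm_fderiv_sq_of_hasCompactSupport [OpensMeasurableSpace V]
    [IsFiniteMeasureOnCompacts μ] (hφ : ContDiff ℝ 1 φ) (hc : HasCompactSupport φ) :
    Integrable (fun x => ‖fderiv ℝ φ x‖ ^ 2) μ := by
  have hc' : HasCompactSupport fun x => ‖fderiv ℝ φ x‖ ^ 2 :=
    (hc.fderiv ℝ).comp_left (g := fun L : V →L[ℝ] ℝ => ‖L‖ ^ 2) (by simp)
  exact ((hφ.continuous_fderiv one_ne_zero).norm.pow 2).integrable_of_hasCompactSupport hc'

lemma mul_integral_sq_le_integral_energy {D m : ℝ} (hD : 0 ≤ D) (hw : ∀ x, m ≤ w x)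
    (hφ : Integrable (fun x => φ x ^ 2) μ)
    (hE : Integrable (fun x => D * ‖fderiv ℝ φ x‖ ^ 2 + w x * φ x ^ 2) μ) :
    m * ∫ x, φ x ^ 2 ∂μ ≤ ∫ x, D * ‖fderiv ℝ φ x‖ ^ 2 + w x * φ x ^ 2 ∂μ := by
  rw [← integral_const_mul]
  refine integral_mono (hφ.const_mul m) hE fun x => ?_
  nlinarith [mul_le_mul_of_nonneg_right (hw x) (sq_nonneg (φ x)),
    mul_nonneg hD (sq_nonneg ‖fderiv ℝ φ x‖)]

lemma integral_energy_const_mul (hφ : Differentiable ℝ φ) (D c : ℝ) :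
    ∫ x, D * ‖fderiv ℝ (fun y => c * φ y) x‖ ^ 2 + w x * (c * φ x) ^ 2 ∂μ
      = c ^ 2 * ∫ x, D * ‖fderiv ℝ φ x‖ ^ 2 + w x * φ x ^ 2 ∂μ := by
  rw [← integral_const_mul]
  congr 1 with x
  rw [fderiv_const_mul (hφ x), norm_smul, Real.norm_eq_abs, mul_pow, mul_pow, sq_abs]
  ring

lemma integral_energy_sub {D : ℝ} {b d : V → ℝ}
    (hE : Integrable (fun x => D * ‖fderiv ℝ φ x‖ ^ 2 + d x * φ x ^ 2) μ)
    (hN : Integrable (fun x => b x * φ x ^ 2) μ) :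
    ∫ x, D * ‖fderiv ℝ φ x‖ ^ 2 + (d x - b x) * φ x ^ 2 ∂μ
      = (∫ x, D * ‖fderiv ℝ φ x‖ ^ 2 + d x * φ x ^ 2 ∂μ) - ∫ x, b x * φ x ^ 2 ∂μ := by
  rw [← integral_sub hE hN]
  congr 1 with x
  ring

end DirichletEnergy

abbrev BallTestFunction (V : Type*) [NormedAddCommGroup V] [NormedSpace ℝ V] (R : ℝ) : Type _ :=
  {φ : V → ℝ // ContDiff ℝ 1 φ ∧ tsupport φ ⊆ ball (0 : V) R ∧ φ ≠ 0}

namespace BallTestFunction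

variable {V : Type*} [NormedAddCommGroup V] [NormedSpace ℝ V] {R : ℝ}

lemma nonempty [FiniteDimensional ℝ V] (hR : 0 < R) : Nonempty (BallTestFunction V R) := by
  obtain ⟨f, hsupp, -, hf, -, hf0⟩ :=
    exists_contDiff_tsupport_subset (n := 1) (ball_mem_nhds (0 : V) hR)
  exact ⟨f, hf, hsupp, fun h => by simp [h] at hf0⟩

variable (φ : BallTestFunction V R)

lemma hasCompactSupport [ProperSpace V] : HasCompactSupport φ.1 :=
  (isCompact_closedBall 0 R).of_isClosed_subset (isClosed_tsupport _)
    (φ.2.2.1.trans ball_subset_closedBall)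

variable [MeasurableSpace V] [OpensMeasurableSpace V] [ProperSpace V]
  {μ : Measure V} [IsFiniteMeasureOnCompacts μ]

lemma integrable_sq : Integrable (fun x => φ.1 x ^ 2) μ :=
  φ.2.1.continuous.integrable_sq_of_hasCompactSupport φ.hasCompactSupport

lemma integral_sq_pos [μ.IsOpenPosMeasure] : 0 < ∫ x in ball 0 R, φ.1 x ^ 2 ∂μ :=
  setIntegral_sq_pos φ.2.1.continuous φ.hasCompactSupport φ.2.2.1 φ.2.2.2

lemma integrable_mul_sq {w : V → ℝ} {m M : ℝ} (hw : ContinuousOn w (ball 0 R))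
    (hwb : ∀ x, m ≤ w x ∧ w x ≤ M) :
    Integrable (fun x => w x * φ.1 x ^ 2) (μ.restrict (ball 0 R)) :=
  φ.integrable_sq.bdd_mul (hw.aestronglyMeasurable measurableSet_ball)
    (c := max |m| |M|) (.of_forall fun x => abs_le_max_abs_abs (hwb x).1 (hwb x).2)

lemma integrable_energy (D : ℝ) {w : V → ℝ} {m M : ℝ} (hw : ContinuousOn w (ball 0 R))
    (hwb : ∀ x, m ≤ w x ∧ w x ≤ M) :
    Integrable (fun x => D * ‖fderiv ℝ φ.1 x‖ ^ 2 + w x * φ.1 x ^ 2) (μ.restrict (ball 0 R)) :=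
  (φ.2.1.integrable_norm_fderiv_sq_of_hasCompactSupport φ.hasCompactSupport).const_mul D
    |>.add (φ.integrable_mul_sq hw hwb)

end BallTestFunction

section EuclideanBall

variable {n : ℕ} {D R : ℝ} {b d : EuclideanSpace ℝ (Fin n) → ℝ}

lemma R0Di_eq_iSup : R0Di n D R b d = ⨆ φ : BallTestFunction (EuclideanSpace ℝ (Fin n)) R,
    (∫ x in ball 0 R, b x * φ.1 x ^ 2) /
      ∫ x in ball 0 R, D * ‖fderiv ℝ φ.1 x‖ ^ 2 + d x * φ.1 x ^ 2 := by
  refine congrArg sSup (Set.ext fun q => ⟨?_, ?_⟩)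
  · rintro ⟨φ, hφ, hsupp, hne, rfl⟩
    exact ⟨⟨φ, hφ, hsupp, hne⟩, rfl⟩
  · rintro ⟨⟨φ, hφ, hsupp, hne⟩, rfl⟩
    exact ⟨φ, hφ, hsupp, hne, rfl⟩

lemma lamStar_eq_iInf : lamStar n D R b d = ⨅ φ : BallTestFunction (EuclideanSpace ℝ (Fin n)) R,
    (∫ x in ball 0 R, D * ‖fderiv ℝ φ.1 x‖ ^ 2 + (d x - b x) * φ.1 x ^ 2) /
      ∫ x in ball 0 R, φ.1 x ^ 2 := by
  refine congrArg sInf (Set.ext fun q => ⟨?_, ?_⟩)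
  · rintro ⟨φ, hφ, hsupp, hS, rfl⟩
    refine ⟨⟨φ, hφ, hsupp, ?_⟩, by simp only [hS, div_one]⟩
    rintro rfl
    simp at hS
  · rintro ⟨φ, rfl⟩
    -- the quotient is invariant under scaling, so `φ / ‖φ‖_{L²}` realizes it in `lamStar`'s set
    set c := (√(∫ x in ball 0 R, φ.1 x ^ 2))⁻¹
    have hc : c ^ 2 * ∫ x in ball 0 R, φ.1 x ^ 2 = 1 := by
      rw [inv_pow, Real.sq_sqrt φ.integral_sq_pos.le, inv_mul_cancel₀ φ.integral_sq_pos.ne']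
    refine ⟨fun x => c * φ.1 x, contDiff_const.mul φ.2.1, tsupport_mul_subset_right.trans φ.2.2.1,
      by rw [integral_sq_const_mul, hc], ?_⟩
    beta_reduce
    rw [integral_energy_const_mul (φ.2.1.differentiable one_ne_zero),
      div_eq_iff φ.integral_sq_pos.ne', mul_right_comm, hc, one_mul]

end EuclideanBall

/-- `1 - R_0^{Di}(D, B_R)` has the same sign as `λ*(D, B_R)`. -/
theorem sign_lamStar_iff_R0Di (n : ℕ) (D R b1 b2 : ℝ)
    (b d : EuclideanSpace ℝ (Fin n) → ℝ)
    (hD : 0 < D) (hR : 0 < R) (hb1 : 0 < b1)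
    (hbc : ContinuousOn b (Metric.closedBall (0 : EuclideanSpace ℝ (Fin n)) R))
    (hdc : ContinuousOn d (Metric.closedBall (0 : EuclideanSpace ℝ (Fin n)) R))
    (hb : ∀ x, b1 ≤ b x ∧ b x ≤ b2) (hd : ∀ x, b1 ≤ d x ∧ d x ≤ b2) :
    (0 < lamStar n D R b d ↔ R0Di n D R b d < 1) ∧
    (lamStar n D R b d = 0 ↔ R0Di n D R b d = 1) ∧
    (lamStar n D R b d < 0 ↔ 1 < R0Di n D R b d) := by
  have hb2 : 0 < b2 := hb1.trans_le ((hb 0).1.trans (hb 0).2)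
  have := BallTestFunction.nonempty (V := EuclideanSpace ℝ (Fin n)) hR
  have hN (φ : BallTestFunction _ R) :=
    φ.integrable_mul_sq (μ := volume) (hbc.mono ball_subset_closedBall) hb
  have hE (φ : BallTestFunction _ R) :=
    φ.integrable_energy (μ := volume) D (hdc.mono ball_subset_closedBall) hd
  rw [lamStar_eq_iInf, R0Di_eq_iSup]
  exact sign_iInf_div_iff_iSup_div hb1 hb2
    (fun φ => integral_energy_sub (hE φ) (hN φ))
    (fun φ => φ.integral_sq_pos)
    (fun φ => mul_integral_sq_le_integral_energy hD.le (fun x => (hd x).1) φ.integrable_sq (hE φ))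
    (fun φ => integral_mul_sq_le (fun x => (hb x).2) (hN φ) φ.integrable_sq)
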